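/- Let M ≥ 1 and let p : ℝ^M → [1,∞) be measurable with p⁺ := sup p < ∞ and such that 1/p is log-Hölder continuous with constant c_log; let ℓ > 0. Then there is a constant c, depending only on c_log, ℓ and p⁺, such that for every cube K ⊂ ℝ^M with Lebesgue measure |K| ≤ 1, every κ ∈ [0,1] and every ρ ≥ 0 with |K|^ℓ ≤ ρ ≤ |K|^{−ℓ}, one has (κ + ρ)^{p(x) − p(y)} ≤ c for all x, y ∈ K. -/

import Mathlib

/-!
Write `D = |p x - p y|`. Since `1 ≤ p ≤ p⁺`, log-Hölder continuity of `1 / p` gives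
`D ≤ c_log (p⁺)² / log (e + 1 / |x - y|)`, and as `|x - y| ≤ √M s` this modulus absorbs the
logarithmic blow-up of the side length: `D · log (1 / s) ≤ c_log (p⁺)² (1 + log √M)`.
The base `κ + ρ` lies in `[|K|^ℓ, 2 |K|^(-ℓ)]`, so
`|log (κ + ρ)| ≤ log 2 + M ℓ log (1 / s)`, and `(κ + ρ)^(p x - p y) ≤ exp (D |log (κ + ρ)|)`
is bounded independently of `K`.
-/

open Set

open Real

def IsLogHolderWith {E : Type*} [NormedAddCommGroup E] (c : ℝ) (g : E → ℝ) : Prop :=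
  ∀ x y, x ≠ y → |g x - g y| ≤ c / log (exp 1 + 1 / ‖x - y‖)

lemma EuclideanSpace.norm_le_sqrt_card_mul {ι : Type*} [Fintype ι] (x : EuclideanSpace ℝ ι)
    {s : ℝ} (hs : 0 ≤ s) (hx : ∀ i, |x i| ≤ s) : ‖x‖ ≤ √(Fintype.card ι) * s := by
  rw [EuclideanSpace.norm_eq]
  calc √(∑ i, ‖x i‖ ^ 2) ≤ √(∑ _ : ι, s ^ 2) := by
        gcongr with i
        exact (Real.norm_eq_abs _).trans_le (hx i)
    _ = √(Fintype.card ι) * s := by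
        simp [Real.sqrt_mul, Real.sqrt_sq hs]

lemma one_le_log_exp_one_add {t : ℝ} (ht : 0 ≤ t) : 1 ≤ log (exp 1 + t) := by
  rw [le_log_iff_exp_le (by positivity)]
  linarith

lemma abs_sub_le_sq_mul_abs_one_div_sub {a b P : ℝ} (ha : 0 < a) (hb : 0 < b) (haP : a ≤ P)
    (hbP : b ≤ P) : |a - b| ≤ P ^ 2 * |1 / a - 1 / b| := by
  have hab : |a - b| = a * b * |1 / a - 1 / b| := by
    rw [one_div, one_div, inv_sub_inv ha.ne' hb.ne', abs_div, abs_of_pos (mul_pos ha hb),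
      abs_sub_comm]
    field_simp
  rw [hab]
  gcongr
  rw [sq]
  exact mul_le_mul haP hbP hb.le (ha.le.trans haP)

lemma IsLogHolderWith.abs_sub_le_of_one_div {E : Type*} [NormedAddCommGroup E] {c P : ℝ}
    {p : E → ℝ} (hc : 0 ≤ c) (hp : ∀ z, 1 ≤ p z ∧ p z ≤ P)
    (hlh : IsLogHolderWith c fun z ↦ 1 / p z) (x y : E) :
    |p x - p y| ≤ c * P ^ 2 / log (exp 1 + 1 / ‖x - y‖) := by
  obtain rfl | hxy := eq_or_ne x y
  · have hP : 0 ≤ P := by linarith [hp x]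
    rw [sub_self, abs_zero]
    exact div_nonneg (by positivity) (zero_le_one.trans (one_le_log_exp_one_add (by positivity)))
  calc |p x - p y| ≤ P ^ 2 * |1 / p x - 1 / p y| :=
        abs_sub_le_sq_mul_abs_one_div_sub (by linarith [hp x]) (by linarith [hp y])
          (hp x).2 (hp y).2
    _ ≤ P ^ 2 * (c / log (exp 1 + 1 / ‖x - y‖)) := by gcongr; exact hlh x y hxy
    _ = c * P ^ 2 / log (exp 1 + 1 / ‖x - y‖) := by ring

lemma neg_log_le_log_add_log_exp_one_add {d k s : ℝ} (hd : 0 < d) (hk : 0 < k)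
    (hds : d ≤ k * s) : -log s ≤ log k + log (exp 1 + 1 / d) := by
  have hs_pos : 0 < s := pos_of_mul_pos_right (hd.trans_le hds) hk.le
  rw [← log_inv, ← log_mul hk.ne' (by positivity)]
  apply log_le_log (by positivity)
  calc s⁻¹ ≤ k / d := by rw [le_div_iff₀ hd]; field_simp; linarith
    _ ≤ k * (exp 1 + 1 / d) := by rw [mul_add, mul_one_div]; linarith [mul_pos hk (exp_pos 1)]

lemma mul_neg_log_le_of_le_div_log {D B d k s : ℝ} (hD : 0 ≤ D) (hB : 0 ≤ B) (hk : 1 ≤ k)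
    (hd : 0 < d) (hds : d ≤ k * s) (hDB : D ≤ B / log (exp 1 + 1 / d)) :
    D * -log s ≤ B * (1 + log k) := by
  set L := log (exp 1 + 1 / d)
  have hL : 1 ≤ L := one_le_log_exp_one_add (by positivity)
  have hlogk : 0 ≤ log k := log_nonneg hk
  calc D * -log s ≤ D * (log k + L) :=
        mul_le_mul_of_nonneg_left (neg_log_le_log_add_log_exp_one_add hd (by linarith) hds) hD
    _ ≤ B / L * (log k + L) := mul_le_mul_of_nonneg_right hDB (by linarith)
    _ = B * (log k / L + 1) := by field_simp
    _ ≤ B * (1 + log k) := mul_le_mul_of_nonneg_left (by linarith [div_le_self hlogk hL]) hB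

lemma abs_log_le_log_two_sub_log {b δ : ℝ} (hδ : 0 < δ) (hδ1 : δ ≤ 1) (hlo : δ ≤ b)
    (hhi : b ≤ 1 + δ⁻¹) : |log b| ≤ log 2 - log δ := by
  have hb : 0 < b := hδ.trans_le hlo
  have hlog2 : 0 ≤ log 2 := log_nonneg one_le_two
  rw [abs_le]
  constructor
  · linarith [log_le_log hδ hlo]
  · have hδinv : 1 ≤ δ⁻¹ := one_le_inv_iff₀.2 ⟨hδ, hδ1⟩
    rw [← log_div two_ne_zero hδ.ne']
    apply log_le_log hb
    rw [div_eq_mul_inv]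
    linarith

lemma rpow_le_exp_mul_of_abs_log_le {b t D Λ : ℝ} (hb : 0 < b) (ht : |t| ≤ D)
    (hΛ : |log b| ≤ Λ) : b ^ t ≤ exp (D * Λ) := by
  rw [rpow_def_of_pos hb, mul_comm D]
  apply exp_le_exp.2
  calc log b * t ≤ |log b| * |t| := by rw [← abs_mul]; exact le_abs_self _
    _ ≤ Λ * D := mul_le_mul hΛ ht (abs_nonneg _) ((abs_nonneg _).trans hΛ)

theorem stmt3 (M : ℕ) (hM : 1 ≤ M) (clog ℓ pplus : ℝ) (hclog : 0 ≤ clog) (hℓ : 0 < ℓ) :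
    ∃ c : ℝ, 0 < c ∧ ∀ p : EuclideanSpace ℝ (Fin M) → ℝ,
      Measurable p →
      (∀ z, 1 ≤ p z ∧ p z ≤ pplus) →
      (∀ x y : EuclideanSpace ℝ (Fin M), x ≠ y →
        |1 / p x - 1 / p y| ≤ clog / Real.log (Real.exp 1 + 1 / ‖x - y‖)) →
      ∀ (a : EuclideanSpace ℝ (Fin M)) (s : ℝ), 0 ≤ s → (s ^ M : ℝ) ≤ 1 →
        ∀ κ ρ : ℝ, κ ∈ Icc (0:ℝ) 1 → 0 ≤ ρ →
          ((s ^ M : ℝ) ^ ℓ ≤ ρ) → (ρ ≤ (s ^ M : ℝ) ^ (-ℓ)) →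
          ∀ x y : EuclideanSpace ℝ (Fin M),
            (∀ i, x i ∈ Icc (a i) (a i + s)) → (∀ i, y i ∈ Icc (a i) (a i + s)) →
            (κ + ρ) ^ (p x - p y) ≤ c := by
  set B := clog * pplus ^ 2
  have hB : 0 ≤ B := by positivity
  have hM1 : 1 ≤ √(M : ℝ) := one_le_sqrt.2 (by exact_mod_cast hM)
  have hlogM : 0 ≤ log √(M : ℝ) := log_nonneg hM1
  have hlog2 : 0 ≤ log 2 := log_nonneg one_le_two
  refine ⟨exp (B * log 2 + M * ℓ * (B * (1 + log √M))), exp_pos _, ?_⟩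
  intro p _ hp hlh a s hs hsM κ ρ hκ _ hρlo hρhi x y hx hy
  obtain rfl | hxy := eq_or_ne x y
  · rw [sub_self, rpow_zero]
    exact one_le_exp (by positivity)
  have hnorm : ‖x - y‖ ≤ √M * s := by
    simpa using EuclideanSpace.norm_le_sqrt_card_mul (x - y) hs fun i ↦ by
      rw [PiLp.sub_apply, abs_sub_le_iff]
      constructor <;> linarith [(hx i).1, (hx i).2, (hy i).1, (hy i).2]
  have hd : 0 < ‖x - y‖ := norm_pos_iff.2 (sub_ne_zero.2 hxy)
  have hs_pos : 0 < s := pos_of_mul_pos_right (hd.trans_le hnorm) (sqrt_nonneg _)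
  have hD := IsLogHolderWith.abs_sub_le_of_one_div hclog hp hlh x y
  have hDB : |p x - p y| ≤ B := hD.trans (div_le_self hB (one_le_log_exp_one_add (by positivity)))
  have hDlog := mul_neg_log_le_of_le_div_log (abs_nonneg _) hB hM1 hd hnorm hD
  have hδ : 0 < (s ^ M : ℝ) ^ ℓ := by positivity
  have hlogδ : log ((s ^ M : ℝ) ^ ℓ) = M * ℓ * log s := by
    rw [log_rpow (by positivity), log_pow]; ring
  have hbase : |log (κ + ρ)| ≤ log 2 - log ((s ^ M : ℝ) ^ ℓ) :=
    abs_log_le_log_two_sub_log hδ (rpow_le_one (by positivity) hsM hℓ.le)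
      (by linarith [hκ.1]) (by rw [← rpow_neg (by positivity)]; linarith [hκ.2])
  calc (κ + ρ) ^ (p x - p y) ≤ exp (|p x - p y| * (log 2 - log ((s ^ M : ℝ) ^ ℓ))) :=
        rpow_le_exp_mul_of_abs_log_le (by linarith [hκ.1]) le_rfl hbase
    _ ≤ exp (B * log 2 + M * ℓ * (B * (1 + log √M))) := by
        gcongr
        have := mul_le_mul_of_nonneg_right hDB hlog2
        have := mul_le_mul_of_nonneg_left hDlog (by positivity : (0 : ℝ) ≤ M * ℓ)
        rw [hlogδ]
        linarith
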